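/- Each assignment block for variable i in the Takenaga–Walsh reduction admits exactly two internal orderings of its four tiles consistent with horizontal matching: one producing the vertical output signal (i, −i) (interpreted as i = true) and one producing (−i, i) (interpreted as i = false). -/

import Mathlib

/-- Edge labels: integers plus the special boundary markers `top`, `left`, `right`. -/
inductive Lab where
  | num : ℤ → Lab
  | top : Lab
  | left : Lab
  | right : Lab
deriving DecidableEq

/-- A Tetravex tile: labels on its top, right, bottom and left edges. -/
structure Tile where
  top : Lab
  right : Lab
  bottom : Lab
  left : Lab
deriving DecidableEq

/-- A placement on an `h × w` board (first index = row, second = column) is proper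
if horizontally adjacent tiles agree on the shared vertical edge and vertically
adjacent tiles agree on the shared horizontal edge. -/
def IsProper (h w : ℕ) (p : Fin h → Fin w → Tile) : Prop :=
  (∀ (i : Fin h) (j j' : Fin w), (j' : ℕ) = (j : ℕ) + 1 → (p i j).right = (p i j').left) ∧
  (∀ (i i' : Fin h) (j : Fin w), (i' : ℕ) = (i : ℕ) + 1 → (p i j).bottom = (p i' j).top)

/-- The multiset of tiles used by a placement. -/
def TilesOf (h w : ℕ) (p : Fin h → Fin w → Tile) : Multiset Tile :=
  (Finset.univ : Finset (Fin h × Fin w)).val.map fun q => p q.1 q.2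

/-- A multiset of tiles admits a proper tiling of an `h × w` board. -/
def Tileable (h w : ℕ) (T : Multiset Tile) : Prop :=
  ∃ p : Fin h → Fin w → Tile, TilesOf h w p = T ∧ IsProper h w p

/-- The four assignment tiles of variable `i`, in the `true` configuration order. -/
def aList (i : ℤ) : List Tile :=
  [⟨.top, .num i, .num 0, .num (i - 1)⟩, ⟨.top, .num i, .num i, .num i⟩,
   ⟨.top, .num i, .num (-i), .num i⟩, ⟨.top, .num (i + 1), .num 0, .num i⟩]

/-- The four assignment tiles of variable `i`, in the `false` configuration order. -/
def aListF (i : ℤ) : List Tile :=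
  [⟨.top, .num i, .num 0, .num (i - 1)⟩, ⟨.top, .num i, .num (-i), .num i⟩,
   ⟨.top, .num i, .num i, .num i⟩, ⟨.top, .num (i + 1), .num 0, .num i⟩]

/-- A horizontal ordering of tiles is valid for variable `i` if consecutive
right/left labels match and the outer left and right labels are `i-1` and `i+1`. -/
def ValidOrder (i : ℤ) (l : List Tile) : Prop :=
  List.Chain' (fun s t => s.right = t.left) l ∧
  l.head?.map Tile.left = some (Lab.num (i - 1)) ∧
  l.getLast?.map Tile.right = some (Lab.num (i + 1))

/-! Only the first tile of the block has left label `i - 1` and only the last has right label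
`i + 1` (as `i - 1 ≠ i ≠ i + 1`), so a consistent ordering starts and ends with them. The two
middle tiles may then come in either order, since every inner label equals `i`. -/

theorem List.eq_or_eq_swap_of_perm_of_head?_of_getLast? {α : Type*} {l : List α} {a b c d : α}
    (hperm : l.Perm [a, b, c, d]) (hhead : l.head? = some a) (hlast : l.getLast? = some d) :
    l = [a, b, c, d] ∨ l = [a, c, b, d] := by
  obtain ⟨w, x, y, z, rfl⟩ : ∃ w x y z, l = [w, x, y, z] := by
    match l, hperm.length_eq with
    | [w, x, y, z], _ => exact ⟨w, x, y, z, rfl⟩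
  obtain rfl : w = a := by simpa using hhead
  obtain rfl : z = d := by simpa using hlast
  have hmid : [x, y].Perm [b, c] :=
    (List.perm_append_right_iff [z]).mp ((List.perm_cons w).mp hperm)
  obtain ⟨rfl, rfl⟩ | ⟨rfl, rfl⟩ : (x = b ∧ y = c) ∨ (x = c ∧ y = b) := by
    simpa using List.perm_pair.mp hmid
  exacts [Or.inl rfl, Or.inr rfl]

namespace AssignmentBlock

def leftTile (i : ℤ) : Tile := ⟨.top, .num i, .num 0, .num (i - 1)⟩

def plusTile (i : ℤ) : Tile := ⟨.top, .num i, .num i, .num i⟩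

def minusTile (i : ℤ) : Tile := ⟨.top, .num i, .num (-i), .num i⟩

def rightTile (i : ℤ) : Tile := ⟨.top, .num (i + 1), .num 0, .num i⟩

theorem aList_eq (i : ℤ) : aList i = [leftTile i, plusTile i, minusTile i, rightTile i] := rfl

theorem aListF_eq (i : ℤ) : aListF i = [leftTile i, minusTile i, plusTile i, rightTile i] := rfl

theorem eq_leftTile_of_mem_aList {i : ℤ} {t : Tile} (ht : t ∈ aList i)
    (hleft : t.left = .num (i - 1)) : t = leftTile i := by
  simp only [aList_eq, List.mem_cons, List.not_mem_nil, or_false] at ht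
  rcases ht with rfl | rfl | rfl | rfl
  · rfl
  all_goals simp only [plusTile, minusTile, rightTile, Lab.num.injEq] at hleft; omega

theorem eq_rightTile_of_mem_aList {i : ℤ} {t : Tile} (ht : t ∈ aList i)
    (hright : t.right = .num (i + 1)) : t = rightTile i := by
  simp only [aList_eq, List.mem_cons, List.not_mem_nil, or_false] at ht
  rcases ht with rfl | rfl | rfl | rfl
  rotate_right
  · rfl
  all_goals simp only [leftTile, plusTile, minusTile, Lab.num.injEq] at hright; omega

variable {i : ℤ} {l : List Tile}

theorem head?_eq_leftTile (hperm : l.Perm (aList i)) (hvalid : ValidOrder i l) :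
    l.head? = some (leftTile i) := by
  obtain ⟨t, ht, hleft⟩ := Option.map_eq_some_iff.mp hvalid.2.1
  rw [ht, eq_leftTile_of_mem_aList (hperm.subset (List.mem_of_mem_head? ht)) hleft]

theorem getLast?_eq_rightTile (hperm : l.Perm (aList i)) (hvalid : ValidOrder i l) :
    l.getLast? = some (rightTile i) := by
  obtain ⟨t, ht, hright⟩ := Option.map_eq_some_iff.mp hvalid.2.2
  rw [ht, eq_rightTile_of_mem_aList (hperm.subset (List.mem_of_mem_getLast? ht)) hright]

theorem validOrder_aList (i : ℤ) : ValidOrder i (aList i) :=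
  ⟨.cons_cons rfl <| .cons_cons rfl <| .cons_cons rfl <| .singleton _, rfl, rfl⟩

theorem validOrder_aListF (i : ℤ) : ValidOrder i (aListF i) :=
  ⟨.cons_cons rfl <| .cons_cons rfl <| .cons_cons rfl <| .singleton _, rfl, rfl⟩

end AssignmentBlock

open AssignmentBlock in
theorem assignment_block_two_orderings_general (i : ℤ) :
    (∀ l : List Tile, l.Perm (aList i) →
      (ValidOrder i l ↔ l = aList i ∨ l = aListF i)) ∧
    (aList i).map Tile.bottom = [.num 0, .num i, .num (-i), .num 0] ∧
    (aListF i).map Tile.bottom = [.num 0, .num (-i), .num i, .num 0] := by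
  refine ⟨fun l hperm => ⟨fun hvalid => ?_, ?_⟩, rfl, rfl⟩
  · have hhead := head?_eq_leftTile hperm hvalid
    have hlast := getLast?_eq_rightTile hperm hvalid
    rw [aList_eq] at hperm
    rw [aList_eq, aListF_eq]
    exact List.eq_or_eq_swap_of_perm_of_head?_of_getLast? hperm hhead hlast
  · rintro (rfl | rfl)
    exacts [validOrder_aList i, validOrder_aListF i]

/-- **The assignment block has exactly two consistent internal orderings**: for
`i ≥ 1`, an ordering of the four assignment tiles of variable `i` is consistent
with horizontal matching iff it is the `true` configuration — whose output
signal (the bottom labels of the two middle tiles) is `(i, -i)` — or the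
`false` configuration, whose output signal is `(-i, i)`. -/
theorem assignment_block_two_orderings (i : ℤ) (hi : 1 ≤ i) :
    (∀ l : List Tile, l.Perm (aList i) →
      (ValidOrder i l ↔ l = aList i ∨ l = aListF i)) ∧
    (aList i).map Tile.bottom = [.num 0, .num i, .num (-i), .num 0] ∧
    (aListF i).map Tile.bottom = [.num 0, .num (-i), .num i, .num 0] :=
  assignment_block_two_orderings_general i
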